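/- arXiv:1010.5391 — 2 statements merged into one kernel-verified Lean document; each statement's English description precedes it below -/
import Mathlib

section
/- Every recognizable subset of ℕ² is a finite union of sets of the form Y × Z where Y, Z ⊆ ℕ are ultimately periodic (Mezei's theorem for ℕ²). -/
/-! The image `φ (m, n) = m • φ (1, 0) + n • φ (0, 1)` of a point under a homomorphism into a
finite monoid `M` is determined by the pair `(m • φ (1, 0), n • φ (0, 1)) ∈ M × M`, so a
recognizable set is the finite union, over the pairs `(a, b)` with `a + b` accepted, of the
rectangles `{m | m • φ (1, 0) = a} × {n | n • φ (0, 1) = b}`. Each side of such a rectangle is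
ultimately periodic because, by pigeonhole, the multiples of an element of a finite monoid
repeat after some threshold. -/

/-- `X ⊆ ℕ²` is a recognizable subset of the additive monoid `ℕ²`. -/
def Recognizable2 (X : Set (ℕ × ℕ)) : Prop :=
  ∃ (M : Type) (_ : AddMonoid M) (_ : Finite M) (φ : ℕ × ℕ →+ M) (B : Set M),
    X = φ ⁻¹' B

/-- `X ⊆ ℕ` is ultimately periodic. -/
def UltimatelyPeriodic (X : Set ℕ) : Prop :=
  ∃ N p : ℕ, 1 ≤ p ∧ ∀ n ≥ N, (n ∈ X ↔ n + p ∈ X)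

section FiniteMonoid

variable {M : Type*} [AddMonoid M] [Finite M]

lemma exists_nsmul_eq_add_nsmul (x : M) :
    ∃ N p : ℕ, 1 ≤ p ∧ ∀ n ≥ N, n • x = (n + p) • x := by
  obtain ⟨i, j, hij, hx⟩ := Set.finite_univ.exists_lt_map_eq_of_forall_mem
    (f := fun n : ℕ => n • x) fun _ => Set.mem_univ _
  refine ⟨i, j - i, by omega, fun n hn => ?_⟩
  obtain ⟨t, rfl⟩ := Nat.exists_eq_add_of_le hn
  have hj : i + t + (j - i) = j + t := by omega
  rw [hj, add_nsmul, add_nsmul, show i • x = j • x from hx]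

lemma ultimatelyPeriodic_setOf_nsmul_mem (x : M) (S : Set M) :
    UltimatelyPeriodic {n : ℕ | n • x ∈ S} := by
  obtain ⟨N, p, hp, hper⟩ := exists_nsmul_eq_add_nsmul x
  exact ⟨N, p, hp, fun n hn => by simp only [Set.mem_ofPred_eq, hper n hn]⟩

end FiniteMonoid

lemma AddMonoidHom.apply_nat_prod {M : Type*} [AddMonoid M] (φ : ℕ × ℕ →+ M) (m n : ℕ) :
    φ (m, n) = m • φ (1, 0) + n • φ (0, 1) := by
  rw [← map_nsmul, ← map_nsmul, ← map_add]
  simp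

lemma AddMonoidHom.preimage_eq_iUnion_prod {M : Type*} [AddMonoid M] (φ : ℕ × ℕ →+ M)
    (B : Set M) :
    φ ⁻¹' B = ⋃ p : {p : M × M // p.1 + p.2 ∈ B},
      {m : ℕ | m • φ (1, 0) = p.1.1} ×ˢ {n : ℕ | n • φ (0, 1) = p.1.2} := by
  ext ⟨m, n⟩
  rw [Set.mem_preimage, φ.apply_nat_prod]
  simp only [Set.mem_iUnion, Set.mem_prod, Set.mem_ofPred_eq, Subtype.exists, Prod.exists]
  exact ⟨fun h => ⟨_, _, h, rfl, rfl⟩, fun ⟨_, _, hab, ha, hb⟩ => ha ▸ hb ▸ hab⟩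

theorem stmt_6 (X : Set (ℕ × ℕ)) (hX : Recognizable2 X) :
    ∃ (k : ℕ) (Y Z : Fin k → Set ℕ),
      (∀ i, UltimatelyPeriodic (Y i) ∧ UltimatelyPeriodic (Z i)) ∧
      X = ⋃ i, Y i ×ˢ Z i := by
  obtain ⟨M, _, _, φ, B, rfl⟩ := hX
  let e := (Finite.equivFin {p : M × M // p.1 + p.2 ∈ B}).symm
  refine ⟨_, fun i => {m | m • φ (1, 0) = (e i).1.1}, fun i => {n | n • φ (0, 1) = (e i).1.2},
    fun i => ⟨ultimatelyPeriodic_setOf_nsmul_mem _ {_}, ultimatelyPeriodic_setOf_nsmul_mem _ {_}⟩,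
    ?_⟩
  rw [φ.preimage_eq_iUnion_prod, ← e.surjective.iUnion_comp]
end

section
/- Conversely, if Y, Z ⊆ ℕ are ultimately periodic then Y × Z is a recognizable subset of ℕ², and hence any finite union of such products is recognizable. -/
/-!
An ultimately periodic `Y ⊆ ℕ` with threshold `N` and period `p` is a union of classes of the
congruence `a ~ b ↔ min a N = min b N ∧ a ≡ b [MOD p]`, whose quotient is the finite cyclic monoid
of index `N` and period `p`; so `Y` is recognizable. Recognizable sets are stable under preimages
by homomorphisms, intersections (product monoid) and finite unions (finite power of monoids), and
`Y ×ˢ Z = fst⁻¹ Y ∩ snd⁻¹ Z`.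
-/

def IsRecognizable {A : Type*} [AddMonoid A] (X : Set A) : Prop :=
  ∃ (M : Type) (_ : AddMonoid M) (_ : Finite M) (φ : A →+ M) (B : Set M), X = φ ⁻¹' B

namespace IsRecognizable

variable {A A' : Type*} [AddMonoid A] [AddMonoid A']

theorem preimage {X : Set A'} (hX : IsRecognizable X) (f : A →+ A') :
    IsRecognizable (f ⁻¹' X) := by
  obtain ⟨M, _, _, φ, B, rfl⟩ := hX
  exact ⟨M, inferInstance, inferInstance, φ.comp f, B, rfl⟩

theorem inter {X X' : Set A} (hX : IsRecognizable X) (hX' : IsRecognizable X') :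
    IsRecognizable (X ∩ X') := by
  obtain ⟨M, _, _, φ, B, rfl⟩ := hX
  obtain ⟨M', _, _, φ', B', rfl⟩ := hX'
  exact ⟨M × M', inferInstance, inferInstance, φ.prod φ', B ×ˢ B', rfl⟩

theorem iUnion {ι : Type} [Finite ι] {X : ι → Set A} (hX : ∀ i, IsRecognizable (X i)) :
    IsRecognizable (⋃ i, X i) := by
  choose M _ _ φ B hB using hX
  refine ⟨∀ i, M i, inferInstance, inferInstance, AddMonoidHom.pi φ, {m | ∃ i, m i ∈ B i}, ?_⟩
  ext a
  simp [hB]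

end IsRecognizable

theorem AddCon.isRecognizable_of_saturated {A : Type} [AddMonoid A] (c : AddCon A)
    [Finite c.Quotient] {X : Set A} (hX : ∀ a b, c a b → a ∈ X → b ∈ X) :
    IsRecognizable X := by
  refine ⟨c.Quotient, inferInstance, inferInstance, c.mk', c.mk' '' X, ?_⟩
  refine (Set.subset_preimage_image _ _).antisymm ?_
  rintro b ⟨a, ha, hab⟩
  exact hX a b (c.eq.mp hab) ha

def truncModCon (N p : ℕ) : AddCon ℕ where
  r a b := min a N = min b N ∧ a ≡ b [MOD p]
  iseqv := ⟨fun _ => ⟨rfl, rfl⟩, fun h => ⟨h.1.symm, h.2.symm⟩,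
    fun h h' => ⟨h.1.trans h'.1, h.2.trans h'.2⟩⟩
  add' {a b c d} h h' := ⟨by omega, h.2.add h'.2⟩

theorem exists_lt_truncModCon (N : ℕ) {p : ℕ} (hp : 0 < p) (n : ℕ) :
    ∃ m < N + p, truncModCon N p m n := by
  rcases lt_or_ge n N with hn | hn
  · exact ⟨n, by omega, rfl, rfl⟩
  · have hmod : (n - N) % p < p := Nat.mod_lt _ hp
    refine ⟨N + (n - N) % p, by omega, by omega, ?_⟩
    have := (Nat.mod_modEq (n - N) p).add_left N
    rwa [Nat.add_sub_cancel' hn] at this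

theorem finite_truncModCon_quotient (N : ℕ) {p : ℕ} (hp : 0 < p) :
    Finite (truncModCon N p).Quotient := by
  refine Finite.of_surjective (fun m : Fin (N + p) => ((m : ℕ) : (truncModCon N p).Quotient)) ?_
  rintro ⟨n⟩
  obtain ⟨m, hm, hmn⟩ := exists_lt_truncModCon N hp n
  exact ⟨⟨m, hm⟩, (truncModCon N p).eq.mpr hmn⟩

section Periodic

variable {Y : Set ℕ} {N p : ℕ}

theorem mem_iff_add_mul_mem (H : ∀ n ≥ N, (n ∈ Y ↔ n + p ∈ Y)) {n : ℕ} (hn : N ≤ n) (k : ℕ) :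
    n ∈ Y ↔ n + k * p ∈ Y := by
  induction k with
  | zero => simp
  | succ k ih => rw [ih, H _ (by omega), Nat.succ_mul, Nat.add_assoc]

theorem mem_iff_mem_of_modEq (H : ∀ n ≥ N, (n ∈ Y ↔ n + p ∈ Y)) {a b : ℕ} (ha : N ≤ a)
    (hb : N ≤ b) (hab : a ≡ b [MOD p]) : a ∈ Y ↔ b ∈ Y := by
  wlog hle : a ≤ b generalizing a b
  · exact (this hb ha hab.symm (by omega)).symm
  obtain ⟨k, hk⟩ := (Nat.modEq_iff_dvd' hle).mp hab
  have hb' : b = a + k * p := by rw [Nat.mul_comm] at hk; omega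
  rw [hb']
  exact mem_iff_add_mul_mem H ha k

end Periodic

theorem UltimatelyPeriodic.isRecognizable {Y : Set ℕ} (hY : UltimatelyPeriodic Y) :
    IsRecognizable Y := by
  obtain ⟨N, p, hp, H⟩ := hY
  have := finite_truncModCon_quotient N hp
  refine (truncModCon N p).isRecognizable_of_saturated fun a b ⟨hmin, hmod⟩ ha => ?_
  rcases lt_or_ge a N with haN | haN
  · rwa [show b = a by omega]
  · exact (mem_iff_mem_of_modEq H haN (by omega) hmod).mp ha

theorem UltimatelyPeriodic.isRecognizable_prod {Y Z : Set ℕ} (hY : UltimatelyPeriodic Y)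
    (hZ : UltimatelyPeriodic Z) : IsRecognizable (Y ×ˢ Z) := by
  rw [Set.prod_eq]
  exact (hY.isRecognizable.preimage (AddMonoidHom.fst ℕ ℕ)).inter
    (hZ.isRecognizable.preimage (AddMonoidHom.snd ℕ ℕ))

theorem stmt_7 :
    (∀ Y Z : Set ℕ, UltimatelyPeriodic Y → UltimatelyPeriodic Z →
      Recognizable2 (Y ×ˢ Z)) ∧
    (∀ (k : ℕ) (Y Z : Fin k → Set ℕ),
      (∀ i, UltimatelyPeriodic (Y i)) → (∀ i, UltimatelyPeriodic (Z i)) →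
      Recognizable2 (⋃ i, Y i ×ˢ Z i)) :=
  ⟨fun _ _ hY hZ => hY.isRecognizable_prod hZ,
    fun _ _ _ hY hZ => IsRecognizable.iUnion fun i => (hY i).isRecognizable_prod (hZ i)⟩
end
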